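/- arXiv:2104.07477 — 2 statements merged into one kernel-verified Lean document; each statement's English description precedes it below -/
import Mathlib

section
/- Lorentzian centroid theorem: given points h_1, ..., h_m ∈ H^{d,β} and weights w_1,...,w_m > 0, the point c = √β · (Σ_j w_j h_j)/|‖Σ_j w_j h_j‖_L| is the unique minimizer over c' ∈ H^{d,β} of the weighted sum of squared Lorentzian distances Σ_j w_j d_L²(h_j, c'), where d_L²(x,y) = -2β - 2⟨x,y⟩_L. -/
noncomputable section
open Finset

/-- Lorentzian scalar product on ℝ^{n+1}. -/
def lprod {n : ℕ} (x y : Fin (n + 1) → ℝ) : ℝ :=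
  -(x 0 * y 0) + ∑ i : Fin n, x i.succ * y i.succ

/-- The hyperboloid H^{n,β}. -/
def onH {n : ℕ} (β : ℝ) (x : Fin (n + 1) → ℝ) : Prop :=
  lprod x x = -β ∧ 0 < x 0

/-- The origin (√β, 0, …, 0) of the hyperboloid. -/
def orig (n : ℕ) (β : ℝ) : Fin (n + 1) → ℝ :=
  Fin.cons (Real.sqrt β) (fun _ => 0)

/-- Lorentzian norm. -/
def lnorm {n : ℕ} (v : Fin (n + 1) → ℝ) : ℝ := Real.sqrt (lprod v v)

/-- Euclidean norm of a vector in ℝ^n. -/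
def enorm {n : ℕ} (v : Fin n → ℝ) : ℝ := Real.sqrt (∑ i : Fin n, (v i) ^ 2)

/-- Exponential map at the origin of the hyperboloid. -/
def expO {n : ℕ} (β : ℝ) (v : Fin (n + 1) → ℝ) : Fin (n + 1) → ℝ :=
  fun i => Real.cosh (lnorm v / Real.sqrt β) * orig n β i
    + Real.sqrt β * Real.sinh (lnorm v / Real.sqrt β) * (v i / lnorm v)

/-- Inverse hyperbolic cosine. -/
def arcosh (x : ℝ) : ℝ := Real.log (x + Real.sqrt (x ^ 2 - 1))

/-- Intrinsic distance on the hyperboloid. -/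
def dH {n : ℕ} (β : ℝ) (x y : Fin (n + 1) → ℝ) : ℝ :=
  Real.sqrt β * arcosh (-(lprod x y) / β)

/-- Logarithmic map at the origin of the hyperboloid. -/
def logO {n : ℕ} (β : ℝ) (x : Fin (n + 1) → ℝ) : Fin (n + 1) → ℝ :=
  fun i => dH β (orig n β) x *
    ((x i + (1 / β) * lprod (orig n β) x * orig n β i) /
      lnorm (fun j => x j + (1 / β) * lprod (orig n β) x * orig n β j))

/-- Squared Lorentzian distance. -/
def dL2 {n : ℕ} (β : ℝ) (x y : Fin (n + 1) → ℝ) : ℝ := -2 * β - 2 * lprod x y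


/-!
For points of the hyperboloid, `⟨x, y⟩_L ≤ -β` with equality only when `x = y`: writing
`x = (x₀, u)`, `y = (y₀, v)`, one has `(x₀ y₀)² = (β + u⬝u)(β + v⬝v) ≥ (β + u⬝v)² + β |u - v|²`
by Cauchy–Schwarz. Summing this over pairs shows that `s = Σ wⱼ hⱼ` is timelike with `s₀ > 0`,
so `c` is a positive multiple of `s` lying on the hyperboloid. The objective at `c'` equals
`-2β Σ wⱼ - 2⟨s, c'⟩_L`, and `⟨s, c'⟩_L` is a positive multiple of `⟨c, c'⟩_L`, which is
maximal, equal to `-β`, exactly at `c' = c`.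
-/

section ReverseCauchySchwarz

variable {ι : Type*} [Fintype ι] {β a b : ℝ} {u v : ι → ℝ}

lemma dotProduct_sub_self (u v : ι → ℝ) :
    (u - v) ⬝ᵥ (u - v) = u ⬝ᵥ u + v ⬝ᵥ v - 2 * u ⬝ᵥ v := by
  simp only [sub_dotProduct, dotProduct_sub, dotProduct_comm v u]
  ring

lemma sq_dotProduct_le (u v : ι → ℝ) : (u ⬝ᵥ v) ^ 2 ≤ (u ⬝ᵥ u) * (v ⬝ᵥ v) := by
  simpa [dotProduct, sq] using sum_mul_sq_le_sq_mul_sq univ u v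

-- The two sides differ by `(u⬝u)(v⬝v) - (u⬝v)²`.
lemma sq_add_dotProduct_le (ha : a ^ 2 = β + u ⬝ᵥ u) (hb : b ^ 2 = β + v ⬝ᵥ v) :
    (β + u ⬝ᵥ v) ^ 2 + β * ((u - v) ⬝ᵥ (u - v)) ≤ (a * b) ^ 2 := by
  have := sq_dotProduct_le u v
  rw [dotProduct_sub_self, mul_pow, ha, hb]
  nlinarith

lemma add_dotProduct_le_mul (hβ : 0 ≤ β) (ha₀ : 0 < a) (hb₀ : 0 < b)
    (ha : a ^ 2 = β + u ⬝ᵥ u) (hb : b ^ 2 = β + v ⬝ᵥ v) : β + u ⬝ᵥ v ≤ a * b := by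
  have hkey := sq_add_dotProduct_le ha hb
  have : 0 ≤ β * ((u - v) ⬝ᵥ (u - v)) :=
    mul_nonneg hβ (sum_nonneg fun i _ => mul_self_nonneg _)
  exact abs_le_of_sq_le_sq' (by linarith) (by positivity) |>.2

lemma eq_of_add_dotProduct_eq_mul (hβ : 0 < β) (ha : a ^ 2 = β + u ⬝ᵥ u)
    (hb : b ^ 2 = β + v ⬝ᵥ v) (heq : β + u ⬝ᵥ v = a * b) : u = v := by
  have hkey := sq_add_dotProduct_le ha hb
  rw [← heq, add_le_iff_nonpos_right] at hkey
  have hzero : (u - v) ⬝ᵥ (u - v) = 0 :=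
    le_antisymm (nonpos_of_mul_nonpos_right hkey hβ)
      (sum_nonneg fun i _ => mul_self_nonneg _)
  exact sub_eq_zero.mp (dotProduct_self_eq_zero.mp hzero)

end ReverseCauchySchwarz

section Lorentz

variable {n : ℕ} {β : ℝ}

lemma lprod_eq_dotProduct_tail (x y : Fin (n + 1) → ℝ) :
    lprod x y = -(x 0 * y 0) + Fin.tail x ⬝ᵥ Fin.tail y := rfl

lemma lprod_comm (x y : Fin (n + 1) → ℝ) : lprod x y = lprod y x := by
  simp only [lprod_eq_dotProduct_tail, mul_comm (x 0), dotProduct_comm (Fin.tail x)]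

lemma lprod_smul_left (t : ℝ) (x y : Fin (n + 1) → ℝ) : lprod (t • x) y = t * lprod x y := by
  simp only [lprod, Pi.smul_apply, smul_eq_mul, mul_add, mul_sum, mul_assoc]
  ring

lemma lprod_smul_right (t : ℝ) (x y : Fin (n + 1) → ℝ) : lprod x (t • y) = t * lprod x y := by
  rw [lprod_comm, lprod_smul_left, lprod_comm]

lemma lprod_sum_left {ι : Type*} (s : Finset ι) (f : ι → Fin (n + 1) → ℝ)
    (y : Fin (n + 1) → ℝ) : lprod (∑ j ∈ s, f j) y = ∑ j ∈ s, lprod (f j) y := by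
  simp only [lprod, Finset.sum_apply, sum_mul, sum_add_distrib, sum_neg_distrib]
  rw [sum_comm]

lemma sq_coord_zero_of_onH {x : Fin (n + 1) → ℝ} (hx : onH β x) :
    x 0 ^ 2 = β + Fin.tail x ⬝ᵥ Fin.tail x := by
  have := hx.1
  rw [lprod_eq_dotProduct_tail] at this
  linarith

lemma lprod_le_neg_of_onH (hβ : 0 ≤ β) {x y : Fin (n + 1) → ℝ} (hx : onH β x) (hy : onH β y) :
    lprod x y ≤ -β := by
  have := add_dotProduct_le_mul hβ hx.2 hy.2 (sq_coord_zero_of_onH hx) (sq_coord_zero_of_onH hy)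
  rw [lprod_eq_dotProduct_tail]
  linarith

lemma eq_of_lprod_eq_neg (hβ : 0 < β) {x y : Fin (n + 1) → ℝ} (hx : onH β x) (hy : onH β y)
    (h : lprod x y = -β) : x = y := by
  have hx₀ := sq_coord_zero_of_onH hx
  have hy₀ := sq_coord_zero_of_onH hy
  have htail : Fin.tail x = Fin.tail y :=
    eq_of_add_dotProduct_eq_mul hβ hx₀ hy₀ (by rw [lprod_eq_dotProduct_tail] at h; linarith)
  have hhead : x 0 = y 0 := by
    rw [← htail] at hy₀
    exact (pow_left_inj₀ hx.2.le hy.2.le two_ne_zero).mp (hx₀.trans hy₀.symm)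
  rw [← Fin.cons_self_tail x, ← Fin.cons_self_tail y, hhead, htail]

lemma lprod_lt_neg_of_ne (hβ : 0 < β) {x y : Fin (n + 1) → ℝ} (hx : onH β x) (hy : onH β y)
    (hne : x ≠ y) : lprod x y < -β :=
  (lprod_le_neg_of_onH hβ.le hx hy).lt_of_ne fun h => hne (eq_of_lprod_eq_neg hβ hx hy h)

end Lorentz

section Centroid

variable {ι : Type*} {n : ℕ} {β : ℝ} (s : Finset ι) (w : ι → ℝ) (h : ι → Fin (n + 1) → ℝ)

lemma lprod_sum_smul_self_le (hβ : 0 ≤ β) (hh : ∀ j ∈ s, onH β (h j))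
    (hw : ∀ j ∈ s, 0 ≤ w j) :
    lprod (∑ j ∈ s, w j • h j) (∑ j ∈ s, w j • h j) ≤ -β * (∑ j ∈ s, w j) ^ 2 := by
  calc lprod (∑ j ∈ s, w j • h j) (∑ j ∈ s, w j • h j)
      = ∑ j ∈ s, ∑ k ∈ s, w j * w k * lprod (h k) (h j) := by
        simp only [lprod_sum_left, lprod_smul_left]
        refine sum_congr rfl fun j _ => ?_
        rw [lprod_comm, lprod_sum_left, mul_sum]
        simp only [lprod_smul_left, mul_assoc]
    _ ≤ ∑ j ∈ s, ∑ k ∈ s, w j * w k * -β := by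
        gcongr with j hj k hk
        · exact mul_nonneg (hw j hj) (hw k hk)
        · exact lprod_le_neg_of_onH hβ (hh k hk) (hh j hj)
    _ = -β * (∑ j ∈ s, w j) ^ 2 := by
        rw [sq, sum_mul_sum, mul_sum]
        simp only [mul_sum]
        exact sum_congr rfl fun j _ => sum_congr rfl fun k _ => by ring

lemma sum_smul_apply_zero_pos (hh : ∀ j ∈ s, onH β (h j)) (hw : ∀ j ∈ s, 0 < w j)
    (hs : s.Nonempty) : 0 < (∑ j ∈ s, w j • h j) 0 := by
  simp only [Finset.sum_apply, Pi.smul_apply, smul_eq_mul]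
  exact sum_pos (fun j hj => mul_pos (hw j hj) (hh j hj).2) hs

lemma sum_mul_dL2 (y : Fin (n + 1) → ℝ) :
    ∑ j ∈ s, w j * dL2 β (h j) y = -2 * β * ∑ j ∈ s, w j - 2 * lprod (∑ j ∈ s, w j • h j) y := by
  rw [lprod_sum_left, mul_sum, mul_sum, ← sum_sub_distrib]
  exact sum_congr rfl fun j _ => by rw [lprod_smul_left, dL2]; ring

end Centroid

section Normalization

variable {n : ℕ} {β : ℝ} {v : Fin (n + 1) → ℝ}

lemma onH_smul_of_lprod_self_neg (hβ : 0 < β) (hv : lprod v v < 0) (hv₀ : 0 < v 0) :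
    onH β ((√β / √(-lprod v v)) • v) := by
  constructor
  · rw [lprod_smul_left, lprod_smul_right, ← mul_assoc, div_mul_div_comm,
      Real.mul_self_sqrt hβ.le, Real.mul_self_sqrt (neg_nonneg.mpr hv.le)]
    field_simp [hv.ne]
  · simp only [Pi.smul_apply, smul_eq_mul]
    have : 0 < -lprod v v := neg_pos.mpr hv
    positivity

lemma lprod_lt_of_smul_onH (hβ : 0 < β) {k : ℝ} (hk : 0 < k) {c : Fin (n + 1) → ℝ}
    (hv : onH β (k • v)) (hc : onH β c) (hne : c ≠ k • v) : lprod v c < lprod v (k • v) := by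
  have := lprod_lt_neg_of_ne hβ hv hc hne.symm
  rw [← hv.1] at this
  simp only [lprod_smul_left] at this
  exact lt_of_mul_lt_mul_left this hk.le

end Normalization

theorem lorentzian_centroid {d m : ℕ} {β : ℝ} (hβ : 0 < β) (hm : 0 < m)
    (h : Fin m → Fin (d + 1) → ℝ) (w : Fin m → ℝ)
    (hh : ∀ j, onH β (h j)) (hw : ∀ j, 0 < w j) :
    let s : Fin (d + 1) → ℝ := ∑ j : Fin m, w j • h j
    let c : Fin (d + 1) → ℝ := fun i => Real.sqrt β * s i / Real.sqrt (-(lprod s s))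
    onH β c ∧
    ∀ c' : Fin (d + 1) → ℝ, onH β c' → c' ≠ c →
      (∑ j : Fin m, w j * dL2 β (h j) c) < ∑ j : Fin m, w j * dL2 β (h j) c' := by
  intro s c
  have hne : (univ : Finset (Fin m)).Nonempty := univ_nonempty_iff.mpr ⟨⟨0, hm⟩⟩
  have hW : 0 < ∑ j, w j := sum_pos (fun j _ => hw j) hne
  have hss : lprod s s < 0 :=
    (lprod_sum_smul_self_le _ w h hβ.le (fun j _ => hh j) (fun j _ => (hw j).le)).trans_lt
      (mul_neg_of_neg_of_pos (neg_neg_of_pos hβ) (pow_pos hW 2))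
  set k := √β / √(-lprod s s)
  have hk₀ : 0 < k := div_pos (Real.sqrt_pos.mpr hβ) (Real.sqrt_pos.mpr (neg_pos.mpr hss))
  have hc : c = k • s := funext fun i => by simp only [c, Pi.smul_apply, smul_eq_mul]; ring
  have hcH : onH β c := hc ▸ onH_smul_of_lprod_self_neg hβ hss
    (sum_smul_apply_zero_pos _ w h (fun j _ => hh j) (fun j _ => hw j) hne)
  refine ⟨hcH, fun c' hc' hne' => ?_⟩
  have hmax : lprod s c' < lprod s c := hc ▸ lprod_lt_of_smul_onH hβ hk₀ (hc ▸ hcH) hc' (hc ▸ hne')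
  rw [sum_mul_dL2, sum_mul_dL2]
  linarith
end
end

section
/- Equivalence of matrix-vector multiplications (Theorem 3.1): let α = 1/β, let p: H^{n,β} → D^{n,α} be the diffeomorphism p(x_0, x̂) = √β x̂/(√β + x_0), and let M be an m×n real matrix. Then for every x ∈ H^{n,β} with x ≠ (√β,0,...,0) and M x̂ ≠ 0, p(M ⊗^β x) = M ⊗^α p(x), where M ⊗^β x is the Lorentzian matrix-vector multiplication and M ⊗^α y := (1/√α) tanh((‖My‖/‖y‖) tanh⁻¹(√α‖y‖)) · My/‖My‖ is the Möbius matrix-vector multiplication. -/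
noncomputable section
open Finset

/-- Euclidean norm of a vector in ℝ^n. -/
def euclNorm {n : ℕ} (v : Fin n → ℝ) : ℝ := Real.sqrt (∑ i : Fin n, (v i) ^ 2)

/-- Inverse hyperbolic tangent. -/
def artanh (x : ℝ) : ℝ := Real.log ((1 + x) / (1 - x)) / 2

/-- Lorentzian matrix-vector multiplication M ⊗^β x. -/
def lmul {n m : ℕ} (β : ℝ) (M : Matrix (Fin m) (Fin n) ℝ)
    (x : Fin (n + 1) → ℝ) : Fin (m + 1) → ℝ :=
  expO β (Fin.cons 0 (M.mulVec (Fin.tail (logO β x))))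

/-- Möbius matrix-vector multiplication M ⊗^α y on the Poincaré ball. -/
def mmul {n m : ℕ} (α : ℝ) (M : Matrix (Fin m) (Fin n) ℝ)
    (y : Fin n → ℝ) : Fin m → ℝ :=
  fun i => (1 / Real.sqrt α) *
    Real.tanh ((euclNorm (M.mulVec y) / euclNorm y) * artanh (Real.sqrt α * euclNorm y)) *
    (M.mulVec y i / euclNorm (M.mulVec y))

/-- Projection from the hyperboloid to the Poincaré ball. -/
def toBall {n : ℕ} (β : ℝ) (x : Fin (n + 1) → ℝ) : Fin n → ℝ :=
  fun i => Real.sqrt β * x i.succ / (Real.sqrt β + x 0)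

/-!
Write `x = (c, x̂)`, so that `c² = β + ‖x̂‖²`, and put `θ = arcosh (c / √β)`. The logarithm of `x`
is the tangent vector `(0, (√β θ / ‖x̂‖) x̂)`, so `M ⊗^β x` is the exponential of
`(0, (√β θ / ‖x̂‖) M x̂)`, and the projection sends `(√β cosh u, √β sinh u · e)` to
`√β tanh (u / 2) e`. On the ball side `p x = (√β / (√β + c)) x̂` is a positive multiple of `x̂`, so
`M ⊗^α p x` also points along `M x̂`, with radius
`√β tanh ((‖M x̂‖ / ‖x̂‖) artanh (‖x̂‖ / (√β + c)))`. The radii agree because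
`arcosh (c / √β) = 2 artanh (‖x̂‖ / (√β + c))`.
-/

lemma euclNorm_nonneg {n : ℕ} (v : Fin n → ℝ) : 0 ≤ euclNorm v := Real.sqrt_nonneg _

lemma euclNorm_smul {n : ℕ} (k : ℝ) (v : Fin n → ℝ) : euclNorm (k • v) = |k| * euclNorm v := by
  simp only [euclNorm, Pi.smul_apply, smul_eq_mul, mul_pow, ← Finset.mul_sum]
  rw [Real.sqrt_mul (sq_nonneg k), Real.sqrt_sq_eq_abs]

lemma lnorm_cons_zero {n : ℕ} (v : Fin n → ℝ) :
    lnorm (Fin.cons 0 v : Fin (n + 1) → ℝ) = euclNorm v := by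
  simp [lnorm, lprod, euclNorm, sq]

lemma lprod_orig {n : ℕ} (β : ℝ) (x : Fin (n + 1) → ℝ) : lprod (orig n β) x = -(√β * x 0) := by
  simp [lprod, orig]

lemma onH.apply_zero_sq {n : ℕ} {β : ℝ} {x : Fin (n + 1) → ℝ} (hx : onH β x) :
    x 0 ^ 2 = β + euclNorm (Fin.tail x) ^ 2 := by
  rw [euclNorm, Real.sq_sqrt (Finset.sum_nonneg fun _ _ => sq_nonneg _)]
  have := hx.1
  simp only [lprod, Fin.tail] at this ⊢
  simp only [sq]
  linarith

lemma arcosh_nonneg {x : ℝ} (hx : 1 ≤ x) : 0 ≤ arcosh x :=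
  Real.log_nonneg (by linarith [Real.sqrt_nonneg (x ^ 2 - 1)])

/-- Both sides equal `log ((c + a) / s)`. -/
lemma arcosh_div_eq_two_mul_artanh {s a c : ℝ} (hs : 0 < s) (ha : 0 ≤ a) (hc : 0 < c)
    (h : c ^ 2 = s ^ 2 + a ^ 2) : arcosh (c / s) = 2 * artanh (a / (s + c)) := by
  have hac : a < c := by nlinarith
  have hroot : √((c / s) ^ 2 - 1) = a / s := by
    rw [← Real.sqrt_sq (div_nonneg ha hs.le)]
    congr 1
    field_simp
    linarith
  have hratio : (1 + a / (s + c)) / (1 - a / (s + c)) = (c + a) / s := by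
    have : s + c - a ≠ 0 := by linarith
    field_simp
    nlinarith
  rw [arcosh, artanh, hroot, hratio, ← add_div]
  ring

lemma sinh_div_one_add_cosh (x : ℝ) : Real.sinh x / (1 + Real.cosh x) = Real.tanh (x / 2) := by
  conv_lhs => rw [← mul_div_cancel₀ x (two_ne_zero' ℝ)]
  rw [Real.sinh_two_mul, Real.cosh_two_mul, Real.tanh_eq_sinh_div_cosh]
  have := Real.cosh_pos (x / 2)
  field_simp
  rw [Real.cosh_sq]
  ring

lemma toBall_expO_cons_zero {n : ℕ} {β : ℝ} (hβ : 0 < β) (v : Fin n → ℝ) :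
    toBall β (expO β (Fin.cons 0 v)) =
      fun i => √β * Real.tanh (euclNorm v / (2 * √β)) * (v i / euclNorm v) := by
  have hs : 0 < √β := Real.sqrt_pos.mpr hβ
  funext i
  simp only [toBall, expO, orig, lnorm_cons_zero, Fin.cons_zero, Fin.cons_succ, zero_div, mul_zero,
    add_zero, zero_add]
  rw [show euclNorm v / (2 * √β) = euclNorm v / √β / 2 by ring, ← sinh_div_one_add_cosh]
  have := Real.cosh_pos (euclNorm v / √β)
  field_simp

lemma toBall_expO_cons_zero_smul {n : ℕ} {β k : ℝ} (hβ : 0 < β) (hk : 0 ≤ k) (v : Fin n → ℝ) :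
    toBall β (expO β (Fin.cons 0 (k • v))) =
      fun i => √β * Real.tanh (k * euclNorm v / (2 * √β)) * (v i / euclNorm v) := by
  rw [toBall_expO_cons_zero hβ, euclNorm_smul, abs_of_nonneg hk]
  funext i
  rcases hk.eq_or_lt with rfl | hk
  · simp
  · simp only [Pi.smul_apply, smul_eq_mul, mul_div_mul_left _ _ hk.ne']

lemma dH_orig {n : ℕ} {β : ℝ} (hβ : 0 < β) (x : Fin (n + 1) → ℝ) :
    dH β (orig n β) x = √β * arcosh (x 0 / √β) := by
  have hs : 0 < √β := Real.sqrt_pos.mpr hβ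
  rw [dH, lprod_orig, neg_neg]
  congr 2
  field_simp
  rw [Real.sq_sqrt hβ.le]
  ring

lemma logO_eq_cons_smul {n : ℕ} {β : ℝ} (hβ : 0 < β) (x : Fin (n + 1) → ℝ) :
    logO β x = Fin.cons 0 ((dH β (orig n β) x / euclNorm (Fin.tail x)) • Fin.tail x) := by
  have hproj : (fun j => x j + (1 / β) * lprod (orig n β) x * orig n β j) =
      (Fin.cons 0 (Fin.tail x) : Fin (n + 1) → ℝ) := by
    funext j
    refine Fin.cases ?_ (fun i => ?_) j
    · simp only [lprod_orig]
      simp only [orig, Fin.cons_zero]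
      field_simp
      rw [Real.sq_sqrt hβ.le]
      ring
    · simp [orig, Fin.tail]
  funext j
  have hproj_j := congrFun hproj j
  simp only [logO, hproj, hproj_j, lnorm_cons_zero]
  refine Fin.cases ?_ (fun i => ?_) j
  · simp
  · simp only [Fin.cons_succ, Pi.smul_apply, smul_eq_mul]
    ring

lemma toBall_lmul {n m : ℕ} {β : ℝ} (hβ : 0 < β) (M : Matrix (Fin m) (Fin n) ℝ)
    {x : Fin (n + 1) → ℝ} (hx : onH β x) :
    toBall β (lmul β M x) = fun i => √β *
      Real.tanh (arcosh (x 0 / √β) / 2 *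
        (euclNorm (M.mulVec (Fin.tail x)) / euclNorm (Fin.tail x))) *
      (M.mulVec (Fin.tail x) i / euclNorm (M.mulVec (Fin.tail x))) := by
  have hs : 0 < √β := Real.sqrt_pos.mpr hβ
  have hc : 1 ≤ x 0 / √β := by
    rw [one_le_div hs, ← abs_of_pos hx.2, ← Real.sqrt_sq_eq_abs]
    exact Real.sqrt_le_sqrt (by nlinarith [hx.apply_zero_sq])
  have hk : 0 ≤ √β * arcosh (x 0 / √β) / euclNorm (Fin.tail x) :=
    div_nonneg (mul_nonneg hs.le (arcosh_nonneg hc)) (euclNorm_nonneg _)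
  rw [lmul, logO_eq_cons_smul hβ, dH_orig hβ, Fin.tail_cons, Matrix.mulVec_smul,
    toBall_expO_cons_zero_smul hβ hk]
  funext i
  field_simp

lemma toBall_eq_smul {n : ℕ} (β : ℝ) (x : Fin (n + 1) → ℝ) :
    toBall β x = (√β / (√β + x 0)) • Fin.tail x := by
  funext i
  simp only [toBall, Pi.smul_apply, smul_eq_mul, Fin.tail]
  ring

lemma mmul_smul {n m : ℕ} {k : ℝ} (hk : 0 < k) (α : ℝ) (M : Matrix (Fin m) (Fin n) ℝ)
    (y : Fin n → ℝ) :
    mmul α M (k • y) = fun i => (1 / √α) *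
      Real.tanh (euclNorm (M.mulVec y) / euclNorm y * artanh (√α * (k * euclNorm y))) *
      (M.mulVec y i / euclNorm (M.mulVec y)) := by
  funext i
  simp only [mmul, Matrix.mulVec_smul, euclNorm_smul, abs_of_pos hk, Pi.smul_apply, smul_eq_mul,
    mul_div_mul_left _ _ hk.ne']

theorem lmul_equiv_mmul_general {n m : ℕ} {β α : ℝ} (hβ : 0 < β) (hα : α = 1 / β)
    (M : Matrix (Fin m) (Fin n) ℝ)
    {x : Fin (n + 1) → ℝ} (hx : onH β x) :
    toBall β (lmul β M x) = mmul α M (toBall β x) := by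
  have hs : 0 < √β := Real.sqrt_pos.mpr hβ
  have hc := hx.2
  have hscale : 0 < √β / (√β + x 0) := by positivity
  have hsα : √α = (√β)⁻¹ := by rw [hα, one_div, Real.sqrt_inv]
  have hball : (√β)⁻¹ * (√β / (√β + x 0) * euclNorm (Fin.tail x)) =
      euclNorm (Fin.tail x) / (√β + x 0) := by
    field_simp
  rw [toBall_lmul hβ M hx, toBall_eq_smul, mmul_smul hscale, hsα, hball,
    arcosh_div_eq_two_mul_artanh hs (euclNorm_nonneg _) hc
      (by rw [Real.sq_sqrt hβ.le]; exact hx.apply_zero_sq)]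
  funext i
  rw [one_div, inv_inv]
  ring_nf

theorem lmul_equiv_mmul {n m : ℕ} {β α : ℝ} (hβ : 0 < β) (hα : α = 1 / β)
    (M : Matrix (Fin m) (Fin n) ℝ)
    {x : Fin (n + 1) → ℝ} (hx : onH β x) (hx0 : x ≠ orig n β)
    (hM : M.mulVec (Fin.tail x) ≠ 0) :
    toBall β (lmul β M x) = mmul α M (toBall β x) :=
  lmul_equiv_mmul_general hβ hα M hx
end
end
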